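/- Let φ : ℝⁿ → ℝ be C² and c : ℝⁿ → ℝ be measurable, and set K(y|x) := exp(φ(x) + ⟨∇φ(x), y − x⟩ + c(y)). Assume for every x ∈ ℝⁿ: (i) ∫_{ℝⁿ} K(y|x) dy = 1; (ii) ∫_{ℝⁿ} y K(y|x) dy = x; (iii) ∫_{ℝⁿ} ‖y‖² K(y|x) dy < ∞; and (iv) for every l and k, the map x ↦ ∫ y^l K(y|x) dy is partially differentiable in x^k with derivative obtained by differentiating under the integral sign, i.e. ∂_k ∫ y^l K(y|x) dy = ∫ y^l Σ_j ∂_k∂_jφ(x) (y^j − x^j) K(y|x) dy. Then for every x, the Hessian matrix H(φ)(x) = (∂_i∂_jφ(x)) and the conditional covariance matrix C(x) with entries C(x)^{jl} := ∫ (y^j − x^j)(y^l − x^l) K(y|x) dy satisfy H(φ)(x) · C(x) = Id; in particular H(φ)(x) is invertible and positive definite (so φ is strictly convex), and C(x) = H(φ)(x)⁻¹. -/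

import Mathlib

open MeasureTheory
open scoped RealInnerProductSpace

/-- The Hessian-martingale kernel density `K(y|x) = exp(φ(x) + ⟨∇φ(x), y − x⟩ + c(y))`. -/
noncomputable def hessKer {n : ℕ} (φ c : EuclideanSpace ℝ (Fin n) → ℝ)
    (x y : EuclideanSpace ℝ (Fin n)) : ℝ :=
  Real.exp (φ x + ⟪gradient φ x, y - x⟫ + c y)

/-- The second partial derivative `∂_k ∂_j φ(x)`. -/
noncomputable def secondPartial {n : ℕ} (φ : EuclideanSpace ℝ (Fin n) → ℝ)
    (x : EuclideanSpace ℝ (Fin n)) (k j : Fin n) : ℝ :=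
  fderiv ℝ (fun z => fderiv ℝ φ z (EuclideanSpace.single j 1)) x (EuclideanSpace.single k 1)

/-!
Since the kernel is a martingale, `∫ yˡ K(y|z) dy = zˡ` for every `z`, so the derivative of
this first moment in the direction `e_k` is `δ_kl`. Differentiating under the integral sign
instead gives `∑_j ∂_k∂_jφ(x) ∫ yˡ (yʲ - xʲ) K(y|x) dy`, and because `K(·|x)` is centred at `x`
the integral is the covariance entry `C(x)^{jl}`; hence `H(φ)(x) C(x) = 1`. A covariance matrix
is positive semidefinite, so the invertible `C(x)` is positive definite, and so is its inverse
`H(φ)(x)`. A Hessian that is positive definite everywhere makes `φ` strictly convex on every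
line, hence strictly convex.
-/

open Matrix

section Moments

variable {E : Type*} [NormedAddCommGroup E] [MeasurableSpace E] {μ : Measure E} {p : E → ℝ}

lemma integrable_smul_of_norm_le {F : Type*} [NormedAddCommGroup F] [NormedSpace ℝ F]
    (hp : Integrable p μ) (hp2 : Integrable (fun y => ‖y‖ ^ 2 * p y) μ) {f : E → F}
    (hf : AEStronglyMeasurable f μ) (C : ℝ) (hfC : ∀ y, ‖f y‖ ≤ C * (1 + ‖y‖ ^ 2)) :
    Integrable (fun y => p y • f y) μ := by
  refine Integrable.mono' ((hp.norm.const_mul C).add (hp2.norm.const_mul C))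
    (hp.aestronglyMeasurable.smul hf) (Filter.Eventually.of_forall fun y => ?_)
  simp only [Pi.add_apply, norm_smul, norm_mul, norm_pow, norm_norm]
  have := mul_le_mul_of_nonneg_left (hfC y) (norm_nonneg (p y))
  linarith

lemma integrable_mul_of_abs_le (hp : Integrable p μ)
    (hp2 : Integrable (fun y => ‖y‖ ^ 2 * p y) μ) {f : E → ℝ} (hf : AEStronglyMeasurable f μ)
    (C : ℝ) (hfC : ∀ y, |f y| ≤ C * (1 + ‖y‖ ^ 2)) :
    Integrable (fun y => f y * p y) μ := by
  simpa only [smul_eq_mul, mul_comm] using integrable_smul_of_norm_le hp hp2 hf C hfC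

end Moments

section EuclideanMoments

variable {ι : Type*} [Fintype ι] {p : EuclideanSpace ℝ ι → ℝ} {x : EuclideanSpace ℝ ι}

lemma abs_sub_apply_le_norm_sub (x y : EuclideanSpace ℝ ι) (j : ι) : |y j - x j| ≤ ‖y - x‖ := by
  simpa using PiLp.norm_apply_le (y - x) j

lemma one_add_sq_norm_sub_le (x y : EuclideanSpace ℝ ι) :
    1 + ‖y - x‖ ^ 2 ≤ (2 + 2 * ‖x‖ ^ 2) * (1 + ‖y‖ ^ 2) := by
  have h : ‖y - x‖ ^ 2 ≤ 2 * ‖y‖ ^ 2 + 2 * ‖x‖ ^ 2 := by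
    nlinarith [norm_sub_le y x, norm_nonneg (y - x), sq_nonneg (‖y‖ - ‖x‖)]
  nlinarith [mul_nonneg (sq_nonneg ‖x‖) (sq_nonneg ‖y‖)]

lemma integrable_sub_apply_mul (hp : Integrable p)
    (hp2 : Integrable fun y => ‖y‖ ^ 2 * p y) (j : ι) : Integrable fun y => (y j - x j) * p y := by
  refine integrable_mul_of_abs_le hp hp2 (by fun_prop) (2 + 2 * ‖x‖ ^ 2) fun y => ?_
  nlinarith [abs_sub_apply_le_norm_sub x y j, one_add_sq_norm_sub_le x y, sq_nonneg (‖y - x‖ - 1)]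

lemma integrable_sub_apply_mul_sub_apply_mul (hp : Integrable p)
    (hp2 : Integrable fun y => ‖y‖ ^ 2 * p y) (j l : ι) :
    Integrable fun y => (y j - x j) * (y l - x l) * p y := by
  refine integrable_mul_of_abs_le hp hp2 (by fun_prop) (2 + 2 * ‖x‖ ^ 2) fun y => ?_
  rw [abs_mul]
  nlinarith [abs_sub_apply_le_norm_sub x y j, abs_sub_apply_le_norm_sub x y l,
    one_add_sq_norm_sub_le x y, abs_nonneg (y j - x j), abs_nonneg (y l - x l)]

lemma integral_apply_mul_eq_of_integral_smul_eq (hp : Integrable p)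
    (hp2 : Integrable fun y => ‖y‖ ^ 2 * p y) (hmean : ∫ y, p y • y = x) (j : ι) :
    ∫ y, y j * p y = x j := by
  have hint : Integrable fun y => p y • y :=
    integrable_smul_of_norm_le hp hp2 aestronglyMeasurable_id 1 fun y => by
      nlinarith [sq_nonneg (‖y‖ - 1)]
  have := (EuclideanSpace.proj j (𝕜 := ℝ)).integral_comp_comm hint
  simpa [hmean, mul_comm] using this

lemma integrable_apply_mul_sub_apply_mul (hp : Integrable p)
    (hp2 : Integrable fun y => ‖y‖ ^ 2 * p y) (j l : ι) :
    Integrable fun y => y l * (y j - x j) * p y :=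
  ((integrable_sub_apply_mul_sub_apply_mul hp hp2 j l).add
    ((integrable_sub_apply_mul hp hp2 j).const_mul (x l))).congr
    (ae_of_all _ fun y => by simp only [Pi.add_apply]; ring)

lemma integral_sub_apply_mul_eq_zero (hp1 : ∫ y, p y = 1)
    (hp2 : Integrable fun y => ‖y‖ ^ 2 * p y) (hmean : ∫ y, p y • y = x) (j : ι) :
    ∫ y, (y j - x j) * p y = 0 := by
  have hp := integrable_of_integral_eq_one hp1
  have hfirst := integrable_sub_apply_mul hp hp2 (x := 0) j
  simp only [PiLp.zero_apply, sub_zero] at hfirst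
  simp_rw [sub_mul]
  rw [integral_sub hfirst (hp.const_mul _), integral_const_mul, hp1,
    integral_apply_mul_eq_of_integral_smul_eq hp hp2 hmean, mul_one, sub_self]

/-- The matrix of second moments of the density `p` about `x`; it is the covariance matrix
when `x` is the mean of `p`. -/
noncomputable def covarianceMatrix (p : EuclideanSpace ℝ ι → ℝ) (x : EuclideanSpace ℝ ι) :
    Matrix ι ι ℝ :=
  Matrix.of fun j l => ∫ y, (y j - x j) * (y l - x l) * p y

lemma integral_apply_mul_sub_apply_mul_eq_covarianceMatrix (hp1 : ∫ y, p y = 1)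
    (hp2 : Integrable fun y => ‖y‖ ^ 2 * p y) (hmean : ∫ y, p y • y = x) (j l : ι) :
    ∫ y, y l * (y j - x j) * p y = covarianceMatrix p x j l := by
  have hp := integrable_of_integral_eq_one hp1
  have hsplit : (fun y : EuclideanSpace ℝ ι => y l * (y j - x j) * p y) =
      fun y => (y j - x j) * (y l - x l) * p y + x l * ((y j - x j) * p y) := by
    ext y; ring
  rw [hsplit, integral_add (integrable_sub_apply_mul_sub_apply_mul hp hp2 j l)
    ((integrable_sub_apply_mul hp hp2 j).const_mul _), integral_const_mul,
    integral_sub_apply_mul_eq_zero hp1 hp2 hmean, mul_zero, add_zero]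
  rfl

lemma dotProduct_covarianceMatrix_mulVec (hp : Integrable p)
    (hp2 : Integrable fun y => ‖y‖ ^ 2 * p y) (v : ι → ℝ) :
    v ⬝ᵥ covarianceMatrix p x *ᵥ v = ∫ y, (∑ j, v j * (y j - x j)) ^ 2 * p y := by
  have hint : ∀ j l, Integrable fun y => v j * v l * ((y j - x j) * (y l - x l) * p y) :=
    fun j l => (integrable_sub_apply_mul_sub_apply_mul hp hp2 j l).const_mul _
  have hexpand : ∀ y : EuclideanSpace ℝ ι, (∑ j, v j * (y j - x j)) ^ 2 * p y =
      ∑ j, ∑ l, v j * v l * ((y j - x j) * (y l - x l) * p y) := by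
    intro y
    simp only [sq, Finset.sum_mul, Finset.mul_sum]
    exact Finset.sum_congr rfl fun j _ => Finset.sum_congr rfl fun l _ => by ring
  simp only [hexpand, dotProduct, Matrix.mulVec, covarianceMatrix, Matrix.of_apply]
  rw [integral_finsetSum _ fun j _ => integrable_finsetSum _ fun l _ => hint j l]
  refine Finset.sum_congr rfl fun j _ => ?_
  rw [integral_finsetSum _ fun l _ => hint j l, Finset.mul_sum]
  exact Finset.sum_congr rfl fun l _ => by rw [integral_const_mul]; ring

lemma covarianceMatrix_posSemidef (hp0 : ∀ y, 0 ≤ p y) (hp : Integrable p)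
    (hp2 : Integrable fun y => ‖y‖ ^ 2 * p y) : (covarianceMatrix p x).PosSemidef := by
  refine Matrix.PosSemidef.of_dotProduct_mulVec_nonneg ?_ fun v => ?_
  · ext j l
    simp only [Matrix.conjTranspose_apply, covarianceMatrix, Matrix.of_apply, star_trivial]
    congr 1; ext y; ring
  · rw [star_trivial, dotProduct_covarianceMatrix_mulVec hp hp2]
    exact integral_nonneg fun y => mul_nonneg (sq_nonneg _) (hp0 y)

end EuclideanMoments

open scoped ComplexOrder in
lemma Matrix.PosDef.of_mul_eq_one_of_posSemidef {ι 𝕜 : Type*} [Fintype ι] [DecidableEq ι]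
    [RCLike 𝕜] {A B : Matrix ι ι 𝕜} (hB : B.PosSemidef) (h : A * B = 1) : A.PosDef := by
  have hBpos : B.PosDef := hB.posDef_iff_isUnit.mpr
    (Matrix.isUnit_iff_isUnit_det B |>.mpr (Matrix.isUnit_det_of_left_inverse h))
  simpa only [Matrix.inv_eq_left_inv h] using hBpos.inv

section Convexity

lemma strictConvexOn_univ_of_forall_line {E : Type*} [AddCommGroup E] [Module ℝ E]
    {f : E → ℝ} (h : ∀ x v, v ≠ 0 → StrictConvexOn ℝ Set.univ fun t : ℝ => f (x + t • v)) :
    StrictConvexOn ℝ Set.univ f := by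
  refine ⟨convex_univ, fun x _ y _ hxy a b ha hb hab => ?_⟩
  have hline := (h x (y - x) (sub_ne_zero.mpr hxy.symm)).2 (Set.mem_univ 0) (Set.mem_univ 1)
    zero_ne_one ha hb hab
  have hpoint : x + b • (y - x) = a • x + b • y := by
    rw [eq_sub_of_add_eq hab]; module
  simpa [hpoint] using hline

variable {E : Type*} [NormedAddCommGroup E] [NormedSpace ℝ E]

lemma strictConvexOn_univ_of_fderiv_fderiv_pos {f : E → ℝ} (hf : ContDiff ℝ 2 f)
    (hpos : ∀ x v, v ≠ 0 → 0 < fderiv ℝ (fderiv ℝ f) x v v) : StrictConvexOn ℝ Set.univ f := by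
  refine strictConvexOn_univ_of_forall_line fun x v hv => ?_
  have hline (t : ℝ) : HasDerivAt (fun s : ℝ => x + s • v) v t := by
    simpa using ((hasDerivAt_id t).smul_const v).const_add x
  have hdf : Differentiable ℝ (fderiv ℝ f) :=
    (hf.fderiv_right (m := 1) le_rfl).differentiable one_ne_zero
  have hderiv : deriv (fun t : ℝ => f (x + t • v)) = fun t => fderiv ℝ f (x + t • v) v :=
    funext fun t =>
      ((hf.differentiable two_ne_zero _).hasFDerivAt.comp_hasDerivAt t (hline t)).deriv
  refine strictConvexOn_univ_of_deriv2_pos (by fun_prop) fun t => ?_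
  have hderiv2 : HasDerivAt (fun s : ℝ => fderiv ℝ f (x + s • v) v)
      (fderiv ℝ (fderiv ℝ f) (x + t • v) v v) t :=
    ((ContinuousLinearMap.apply ℝ ℝ v).hasFDerivAt.comp _ (hdf _).hasFDerivAt).comp_hasDerivAt
      t (hline t)
  rw [Function.iterate_succ_apply', Function.iterate_one, hderiv, hderiv2.deriv]
  exact hpos _ v hv

end Convexity

lemma ContinuousLinearMap.apply_apply_eq_dotProduct_mulVec {ι : Type*} [Fintype ι]
    [DecidableEq ι] (B : EuclideanSpace ℝ ι →L[ℝ] EuclideanSpace ℝ ι →L[ℝ] ℝ)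
    (v w : EuclideanSpace ℝ ι) :
    B v w = v.ofLp ⬝ᵥ (Matrix.of fun k j =>
      B (EuclideanSpace.single k 1) (EuclideanSpace.single j 1)) *ᵥ w.ofLp := by
  conv_lhs => rw [← (EuclideanSpace.basisFun ι ℝ).sum_repr v,
    ← (EuclideanSpace.basisFun ι ℝ).sum_repr w]
  simp only [map_sum, map_smul, FunLike.coe_sum, FunLike.coe_smul,
    Finset.sum_apply, Pi.smul_apply, EuclideanSpace.basisFun_apply, EuclideanSpace.basisFun_repr, smul_eq_mul, dotProduct,
    Matrix.mulVec, Matrix.of_apply, Finset.mul_sum]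
  rw [Finset.sum_comm]
  exact Finset.sum_congr rfl fun k _ => Finset.sum_congr rfl fun j _ => by ring

lemma hasLineDerivAt_apply {ι : Type*} [Fintype ι] (x v : EuclideanSpace ℝ ι) (l : ι) :
    HasLineDerivAt ℝ (fun z : EuclideanSpace ℝ ι => z l) (v l) x v :=
  (EuclideanSpace.proj l : EuclideanSpace ℝ ι →L[ℝ] ℝ).hasFDerivAt.hasLineDerivAt v

lemma mul_covarianceMatrix_eq_one_of_hasLineDerivAt {ι : Type*} [Fintype ι] [DecidableEq ι]
    {K : EuclideanSpace ℝ ι → EuclideanSpace ℝ ι → ℝ} {H : EuclideanSpace ℝ ι → Matrix ι ι ℝ}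
    (hnorm : ∀ x, ∫ y, K x y = 1) (hmean : ∀ x, ∫ y, K x y • y = x)
    (hL2 : ∀ x, Integrable fun y => ‖y‖ ^ 2 * K x y)
    (hdiff : ∀ x l k, HasLineDerivAt ℝ (fun z => ∫ y, y l * K z y)
        (∫ y, y l * ((∑ j, H x k j * (y j - x j)) * K x y)) x (EuclideanSpace.single k 1))
    (x : EuclideanSpace ℝ ι) :
    H x * covarianceMatrix (K x) x = 1 := by
  have hK (z : EuclideanSpace ℝ ι) := integrable_of_integral_eq_one (hnorm z)
  ext k l
  have hmoment : (fun z => ∫ y, y l * K z y) = fun z => z l :=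
    funext fun z => integral_apply_mul_eq_of_integral_smul_eq (hK z) (hL2 z) (hmean z) l
  have hderiv := (hasLineDerivAt_apply x (EuclideanSpace.single k 1) l).unique
    (hmoment ▸ hdiff x l k)
  calc (H x * covarianceMatrix (K x) x) k l
      = ∑ j, H x k j * ∫ y, y l * (y j - x j) * K x y := by
        simp only [Matrix.mul_apply,
          integral_apply_mul_sub_apply_mul_eq_covarianceMatrix (hnorm x) (hL2 x) (hmean x)]
    _ = ∫ y, ∑ j, H x k j * (y l * (y j - x j) * K x y) := by
        rw [integral_finsetSum _ fun j _ =>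
          (integrable_apply_mul_sub_apply_mul (hK x) (hL2 x) j l).const_mul _]
        simp only [integral_const_mul]
    _ = ∫ y, y l * ((∑ j, H x k j * (y j - x j)) * K x y) := by
        congr 1; ext y
        rw [Finset.sum_mul, Finset.mul_sum]
        exact Finset.sum_congr rfl fun j _ => by ring
    _ = (1 : Matrix ι ι ℝ) k l := by
        rw [← hderiv, PiLp.single_apply, Matrix.one_apply]
        exact if_congr eq_comm rfl rfl

section Hessian

variable {n : ℕ} {φ : EuclideanSpace ℝ (Fin n) → ℝ} {x : EuclideanSpace ℝ (Fin n)}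

noncomputable def hessianMatrix (φ : EuclideanSpace ℝ (Fin n) → ℝ)
    (x : EuclideanSpace ℝ (Fin n)) : Matrix (Fin n) (Fin n) ℝ :=
  Matrix.of fun i j => secondPartial φ x i j

lemma hessianMatrix_eq_of_differentiableAt (hφ : DifferentiableAt ℝ (fderiv ℝ φ) x) :
    hessianMatrix φ x = Matrix.of fun k j =>
      fderiv ℝ (fderiv ℝ φ) x (EuclideanSpace.single k 1) (EuclideanSpace.single j 1) := by
  ext k j
  simp [hessianMatrix, secondPartial, fderiv_clm_apply hφ (differentiableAt_const _)]

lemma fderiv_fderiv_apply_self (hφ : DifferentiableAt ℝ (fderiv ℝ φ) x)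
    (v : EuclideanSpace ℝ (Fin n)) :
    fderiv ℝ (fderiv ℝ φ) x v v = v.ofLp ⬝ᵥ hessianMatrix φ x *ᵥ v.ofLp := by
  rw [hessianMatrix_eq_of_differentiableAt hφ,
    ContinuousLinearMap.apply_apply_eq_dotProduct_mulVec]

lemma strictConvexOn_univ_of_hessianMatrix_posDef (hφ : ContDiff ℝ 2 φ)
    (hH : ∀ x, (hessianMatrix φ x).PosDef) : StrictConvexOn ℝ Set.univ φ := by
  have hdf : Differentiable ℝ (fderiv ℝ φ) :=
    (hφ.fderiv_right (m := 1) le_rfl).differentiable one_ne_zero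
  refine strictConvexOn_univ_of_fderiv_fderiv_pos hφ fun x v hv => ?_
  rw [fderiv_fderiv_apply_self (hdf x)]
  simpa using (hH x).dotProduct_mulVec_pos (x := v.ofLp) (by simpa using hv)

end Hessian

theorem hessian_inverse_covariance_general (n : ℕ)
    (φ c : EuclideanSpace ℝ (Fin n) → ℝ)
    (hφ : ContDiff ℝ 2 φ)
    (hnorm : ∀ x, (∫ y, hessKer φ c x y) = 1)
    (hmart : ∀ x, (∫ y, hessKer φ c x y • y) = x)
    (hL2 : ∀ x, Integrable (fun y => ‖y‖ ^ 2 * hessKer φ c x y))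
    (hdiff : ∀ (x : EuclideanSpace ℝ (Fin n)) (l k : Fin n),
      HasLineDerivAt ℝ (fun z => ∫ y, y l * hessKer φ c z y)
        (∫ y, y l * ((∑ j : Fin n, secondPartial φ x k j * (y j - x j)) * hessKer φ c x y))
        x (EuclideanSpace.single k 1)) :
    (∀ x, (Matrix.of fun i j => secondPartial φ x i j) *
        (Matrix.of fun j l => ∫ y, (y j - x j) * (y l - x l) * hessKer φ c x y) = 1 ∧
      (Matrix.of fun i j => secondPartial φ x i j : Matrix (Fin n) (Fin n) ℝ).PosDef ∧
      (Matrix.of fun j l => ∫ y, (y j - x j) * (y l - x l) * hessKer φ c x y) =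
        (Matrix.of fun i j => secondPartial φ x i j : Matrix (Fin n) (Fin n) ℝ)⁻¹) ∧
    StrictConvexOn ℝ Set.univ φ := by
  have hHC (x : EuclideanSpace ℝ (Fin n)) :
      hessianMatrix φ x * covarianceMatrix (hessKer φ c x) x = 1 :=
    mul_covarianceMatrix_eq_one_of_hasLineDerivAt hnorm hmart hL2 hdiff x
  have hH (x : EuclideanSpace ℝ (Fin n)) : (hessianMatrix φ x).PosDef :=
    .of_mul_eq_one_of_posSemidef (covarianceMatrix_posSemidef (fun y => (Real.exp_pos _).le)
      (integrable_of_integral_eq_one (hnorm x)) (hL2 x)) (hHC x)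
  exact ⟨fun x => ⟨hHC x, hH x, (Matrix.inv_eq_right_inv (hHC x)).symm⟩,
    strictConvexOn_univ_of_hessianMatrix_posDef hφ hH⟩

/-- Section 4 characterization of Hessian martingales. For a martingale
kernel of the entropic form, the Hessian of `φ` is inverse to the conditional covariance
matrix of the kernel; in particular the Hessian is positive definite and `φ` is strictly
convex. -/
theorem hessian_inverse_covariance (n : ℕ)
    (φ c : EuclideanSpace ℝ (Fin n) → ℝ)
    (hφ : ContDiff ℝ 2 φ) (hc : Measurable c)
    (hnorm : ∀ x, (∫ y, hessKer φ c x y) = 1)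
    (hmart : ∀ x, (∫ y, hessKer φ c x y • y) = x)
    (hL2 : ∀ x, Integrable (fun y => ‖y‖ ^ 2 * hessKer φ c x y))
    (hdiff : ∀ (x : EuclideanSpace ℝ (Fin n)) (l k : Fin n),
      HasLineDerivAt ℝ (fun z => ∫ y, y l * hessKer φ c z y)
        (∫ y, y l * ((∑ j : Fin n, secondPartial φ x k j * (y j - x j)) * hessKer φ c x y))
        x (EuclideanSpace.single k 1)) :
    (∀ x, (Matrix.of fun i j => secondPartial φ x i j) *
        (Matrix.of fun j l => ∫ y, (y j - x j) * (y l - x l) * hessKer φ c x y) = 1 ∧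
      (Matrix.of fun i j => secondPartial φ x i j : Matrix (Fin n) (Fin n) ℝ).PosDef ∧
      (Matrix.of fun j l => ∫ y, (y j - x j) * (y l - x l) * hessKer φ c x y) =
        (Matrix.of fun i j => secondPartial φ x i j : Matrix (Fin n) (Fin n) ℝ)⁻¹) ∧
    StrictConvexOn ℝ Set.univ φ :=
  hessian_inverse_covariance_general n φ c hφ hnorm hmart hL2 hdiff
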